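/- Let $a \in \mathbb{R}$ and $b \in \mathbb{N}$ with $b > a > 1$, and define $f: \mathbb{T} \to \mathbb{C}$ by $f(z) = \sum_{n=1}^{\infty} a^{-n} z^{b^n}$. Then $f$ satisfies the Hölder condition with exponent $\alpha = \log_b a$: there is a constant $C > 0$ such that $|f(z) - f(w)| \le C |z-w|^{\alpha}$ for all $z, w \in \mathbb{T}$. -/

import Mathlib

/-!
Put `α = log_b a`, so that `a ^ n = (b ^ n) ^ α`. On the unit circle
`‖z ^ m - w ^ m‖ ≤ min 2 (m * ‖z - w‖)`, so with `d = ‖z - w‖` the `n`-th term of `f z - f w` is at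
most `a⁻ⁿ * min 2 (bⁿ * d)`. Choose `N` with `b ^ N ≤ 1 / d < b ^ (N + 1)`. The terms with `n ≤ N`
grow geometrically with ratio `b / a > 1`, so their sum is at most a constant times the last one,
which is `≤ a⁻ᴺ`; the terms with `n > N` are at most `2 a⁻ⁿ` and sum to a constant times `a⁻ᴺ`.
Finally `a⁻ᴺ ≤ a * d ^ α` because `b ^ (N + 1) * d > 1`.
-/

open Real Finset

section NormPow

variable {R : Type*} [SeminormedRing R] [NormOneClass R] {z w : R}

theorem norm_pow_sub_pow_le (hz : ‖z‖ ≤ 1) (hw : ‖w‖ ≤ 1) (n : ℕ) :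
    ‖z ^ n - w ^ n‖ ≤ n * ‖z - w‖ := by
  induction n with
  | zero => simp
  | succ n ih =>
    have hzn : ‖z ^ n‖ ≤ 1 := (norm_pow_le z n).trans (pow_le_one₀ (norm_nonneg z) hz)
    calc ‖z ^ (n + 1) - w ^ (n + 1)‖ = ‖z ^ n * (z - w) + (z ^ n - w ^ n) * w‖ := by
          congr 1; noncomm_ring
      _ ≤ ‖z ^ n‖ * ‖z - w‖ + ‖z ^ n - w ^ n‖ * ‖w‖ :=
          (norm_add_le _ _).trans (add_le_add (norm_mul_le _ _) (norm_mul_le _ _))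
      _ ≤ 1 * ‖z - w‖ + n * ‖z - w‖ * 1 := by gcongr
      _ = (n + 1 : ℕ) * ‖z - w‖ := by push_cast; ring

end NormPow

section Majorant

variable {a b d : ℝ}

theorem hasSum_inv_pow_add_succ (ha : 1 < a) (N : ℕ) :
    HasSum (fun n : ℕ => (a ^ (n + N + 1))⁻¹) ((a ^ N)⁻¹ / (a - 1)) := by
  have ha0 : 0 < a := zero_lt_one.trans ha
  have hlim : (a ^ (N + 1))⁻¹ * (1 - a⁻¹)⁻¹ = (a ^ N)⁻¹ / (a - 1) := by
    field_simp [(sub_pos.2 ha).ne', ha0.ne']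
    ring
  refine hlim ▸ ((hasSum_geometric_of_lt_one (inv_nonneg.2 ha0.le)
    (inv_lt_one_of_one_lt₀ ha)).mul_left _).congr_fun fun n => ?_
  rw [← inv_pow, ← inv_pow, ← pow_add]
  ring_nf

theorem summable_inv_pow_mul_min (ha : 1 < a) (hb : 0 ≤ b) (hd : 0 ≤ d) :
    Summable fun n : ℕ => (a ^ (n + 1))⁻¹ * min 2 (b ^ (n + 1) * d) := by
  have ha0 : 0 < a := zero_lt_one.trans ha
  refine Summable.of_nonneg_of_le (fun n => by positivity) (fun n => ?_)
    ((hasSum_inv_pow_add_succ ha 0).summable.mul_left 2)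
  rw [mul_comm 2]
  exact mul_le_mul_of_nonneg_left (min_le_left _ _) (by positivity)

theorem sum_range_inv_pow_mul_min_le (ha : 0 < a) (hab : a < b) (hd : 0 ≤ d) (N : ℕ) :
    ∑ n ∈ range N, (a ^ (n + 1))⁻¹ * min 2 (b ^ (n + 1) * d) ≤ b / (b - a) * (b / a) ^ N * d := by
  have hba : 0 < b - a := sub_pos.2 hab
  induction N with
  | zero => simpa using mul_nonneg (div_nonneg (ha.trans hab).le hba.le) hd
  | succ N ih =>
    have hterm : (a ^ (N + 1))⁻¹ * min 2 (b ^ (N + 1) * d) ≤ (b / a) ^ (N + 1) * d :=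
      calc (a ^ (N + 1))⁻¹ * min 2 (b ^ (N + 1) * d) ≤ (a ^ (N + 1))⁻¹ * (b ^ (N + 1) * d) :=
            mul_le_mul_of_nonneg_left (min_le_right _ _) (by positivity)
        _ = (b / a) ^ (N + 1) * d := by rw [div_pow]; ring
    calc _ ≤ b / (b - a) * (b / a) ^ N * d + (b / a) ^ (N + 1) * d := by
          rw [sum_range_succ]; exact add_le_add ih hterm
      _ = b / (b - a) * (b / a) ^ (N + 1) * d := by
          rw [div_pow, div_pow]
          field_simp [hba.ne', ha.ne']
          ring

theorem tsum_inv_pow_add_mul_min_le (ha : 1 < a) (hb : 0 ≤ b) (hd : 0 ≤ d) (N : ℕ) :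
    ∑' n : ℕ, (a ^ (n + N + 1))⁻¹ * min 2 (b ^ (n + N + 1) * d) ≤ 2 * ((a ^ N)⁻¹ / (a - 1)) := by
  have ha0 : 0 < a := zero_lt_one.trans ha
  refine hasSum_le (fun n => ?_)
    ((summable_nat_add_iff N).2 (summable_inv_pow_mul_min ha hb hd)).hasSum
    ((hasSum_inv_pow_add_succ ha N).mul_left 2)
  rw [mul_comm 2]
  exact mul_le_mul_of_nonneg_left (min_le_left _ _) (by positivity)

theorem inv_pow_le_rpow_logb (ha : 1 ≤ a) (hb : 1 < b) (hd : 0 < d) {N : ℕ} (hN : d⁻¹ ≤ b ^ N) :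
    (a ^ N)⁻¹ ≤ d ^ logb b a := by
  have hpow : a ^ N = (b ^ N) ^ logb b a := by
    rw [← rpow_pow_comm (by linarith), rpow_logb (by linarith) hb.ne' (by linarith)]
  rw [hpow, inv_le_comm₀ (by positivity) (by positivity), ← inv_rpow hd.le]
  exact rpow_le_rpow (by positivity) hN (logb_nonneg hb ha)

theorem tsum_inv_pow_mul_min_le_rpow_logb (ha : 1 < a) (hab : a < b) (hd : 0 ≤ d) :
    ∑' n : ℕ, (a ^ (n + 1))⁻¹ * min 2 (b ^ (n + 1) * d) ≤
      a * (b / (b - a) + 2 / (a - 1)) * d ^ logb b a := by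
  have hb : 1 < b := ha.trans hab
  have hb0 : 0 ≤ b := zero_le_one.trans hb.le
  have hbba : 0 ≤ b / (b - a) := div_nonneg hb0 (sub_pos.2 hab).le
  have hK : 0 ≤ b / (b - a) + 2 / (a - 1) := add_nonneg hbba (div_nonneg zero_le_two (by linarith))
  rcases hd.eq_or_lt with rfl | hd
  · simp [zero_rpow (logb_pos hb ha).ne']
  rcases le_or_gt 1 d with hd1 | hd1
  · calc _ ≤ 2 * ((a ^ 0)⁻¹ / (a - 1)) := tsum_inv_pow_add_mul_min_le ha hb0 hd.le 0
      _ ≤ 1 * (b / (b - a) + 2 / (a - 1)) * 1 := by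
          simp only [pow_zero, inv_one, one_mul, mul_one, mul_one_div]; linarith
      _ ≤ _ := by gcongr; exact one_le_rpow hd1 (logb_nonneg hb ha.le)
  obtain ⟨N, hN, hN1⟩ := exists_nat_pow_near ((one_le_inv₀ hd).2 hd1.le) hb
  have hhead : (b / a) ^ N * d ≤ (a ^ N)⁻¹ :=
    calc (b / a) ^ N * d = b ^ N * d * (a ^ N)⁻¹ := by rw [div_pow]; ring
      _ ≤ d⁻¹ * d * (a ^ N)⁻¹ := by gcongr
      _ = (a ^ N)⁻¹ := by rw [inv_mul_cancel₀ hd.ne', one_mul]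
  have hinv : (a ^ N)⁻¹ ≤ a * d ^ logb b a :=
    calc (a ^ N)⁻¹ = a * (a ^ (N + 1))⁻¹ := by rw [pow_succ]; field_simp
      _ ≤ a * d ^ logb b a := by gcongr; exact inv_pow_le_rpow_logb ha.le hb hd hN1.le
  rw [← (summable_inv_pow_mul_min ha hb0 hd.le).sum_add_tsum_nat_add N]
  calc _ ≤ b / (b - a) * (b / a) ^ N * d + 2 * ((a ^ N)⁻¹ / (a - 1)) :=
        add_le_add (sum_range_inv_pow_mul_min_le (by linarith) hab hd.le N)
          (tsum_inv_pow_add_mul_min_le ha hb0 hd.le N)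
    _ ≤ b / (b - a) * (a ^ N)⁻¹ + 2 / (a - 1) * (a ^ N)⁻¹ := by
        rw [mul_assoc, mul_div_assoc', div_mul_eq_mul_div 2]
        gcongr
    _ ≤ (b / (b - a) + 2 / (a - 1)) * (a * d ^ logb b a) := by rw [← add_mul]; gcongr
    _ = _ := by ring

end Majorant

theorem stmt_3 (a : ℝ) (b : ℕ) (ha : 1 < a) (hb : a < (b : ℝ))
    (f : ℂ → ℂ) (hf : ∀ z : ℂ, f z = ∑' n : ℕ, ((a : ℂ) ^ (n + 1))⁻¹ * z ^ (b ^ (n + 1))) :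
    ∃ C > (0:ℝ), ∀ z ∈ Metric.sphere (0:ℂ) 1, ∀ w ∈ Metric.sphere (0:ℂ) 1,
      ‖f z - f w‖ ≤ C * (‖z - w‖) ^ (Real.logb b a) := by
  have ha0 : 0 < a := zero_lt_one.trans ha
  have hcoeff (n : ℕ) : ‖((a : ℂ) ^ (n + 1))⁻¹‖ = (a ^ (n + 1))⁻¹ := by
    rw [norm_inv, norm_pow, Complex.norm_real, norm_of_nonneg ha0.le]
  have hsummable (u : ℂ) (hu : ‖u‖ = 1) :
      Summable fun n : ℕ => ((a : ℂ) ^ (n + 1))⁻¹ * u ^ (b ^ (n + 1)) :=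
    (hasSum_inv_pow_add_succ ha 0).summable.of_norm_bounded fun n => by
      rw [norm_mul, norm_pow, hu, one_pow, mul_one, hcoeff]
  refine ⟨a * (b / (b - a) + 2 / (a - 1)),
    mul_pos ha0 (add_pos (div_pos (by linarith) (sub_pos.2 hb)) (div_pos two_pos (sub_pos.2 ha))),
    fun z hz w hw => ?_⟩
  rw [mem_sphere_zero_iff_norm] at hz hw
  rw [hf, hf, ← (hsummable z hz).tsum_sub (hsummable w hw)]
  refine (tsum_of_norm_bounded (summable_inv_pow_mul_min ha b.cast_nonneg
    (norm_nonneg (z - w))).hasSum fun n => ?_).trans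
    (tsum_inv_pow_mul_min_le_rpow_logb ha hb (norm_nonneg _))
  rw [← mul_sub, norm_mul, hcoeff]
  gcongr
  refine le_min ?_ ?_
  · calc _ ≤ ‖z ^ b ^ (n + 1)‖ + ‖w ^ b ^ (n + 1)‖ := norm_sub_le _ _
      _ = 2 := by rw [norm_pow, norm_pow, hz, hw]; norm_num
  · exact (norm_pow_sub_pow_le hz.le hw.le _).trans_eq (by push_cast; rfl)
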